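/- arXiv:1705.05934 — 3 statements merged into one kernel-verified Lean document; each statement's English description precedes it below -/
import Mathlib

section
/- Let ψ be a hyperexponential Laplace exponent that is not identically zero (i.e. σ > 0, or a ≠ 0, or N + N̂ ≥ 1), and let q > 0 be real. Then every solution z ∈ ℂ of the equation ψ(z) = q is real and is a simple zero of ψ − q (in particular ψ′(z) ≠ 0 at every solution), and the solutions are located as follows: there is exactly one solution in each interval (ρ_{ℓ−1}, ρ_ℓ) for 1 ≤ ℓ ≤ N; exactly one solution in each interval (−ρ̂_ℓ, −ρ̂_{ℓ−1}) for 1 ≤ ℓ ≤ N̂; exactly one solution in (ρ_N, ∞) if σ > 0 or (σ = 0 and a > 0), and none otherwise; exactly one solution in (−∞, −ρ̂_N̂) if σ > 0 or (σ = 0 and a < 0), and none otherwise; and there are no other solutions. -/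
/-!
For `z ≠ 0`, `ψ(z) - q = z f(z)` with `f(z) = σ²z/2 + a + ∑ᵢ cᵢ / (bᵢ - z)`, where the poles `bᵢ`
are the `ρ_ℓ`, the `-ρ̂_ℓ` and `0`, and all weights `cᵢ` (the `a_ℓ`, `â_ℓ` and `q`) are positive.
Then `Im f(z) = Im z · (σ²/2 + ∑ᵢ cᵢ / |bᵢ - z|²)`, so every root is real. On the real line
`f' = σ²/2 + ∑ᵢ cᵢ / (bᵢ - x)² > 0`, so `f` increases strictly between consecutive poles, running
from `-∞` to `+∞` across each bounded gap, while `f(x) - σ²x/2 → a` at `±∞`; this gives one root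
per gap and decides the two unbounded ones. At a root `ψ' = f + z f' = z f' ≠ 0`. The negative
half-line reduces to the positive one, since `ψ(-z)` is the exponent with the two jump
sides exchanged and `a` replaced by `-a`.
-/

/-- The Laplace exponent of a hyperexponential Lévy process, extended to a rational
function on `ℂ`.  The positive-jump parameters are `aa ℓ, ρ ℓ` for `ℓ ∈ {1, …, N}` and the
negative-jump parameters are `ah ℓ, ρh ℓ` for `ℓ ∈ {1, …, Nh}`. -/
noncomputable def psi (σ A : ℝ) (N Nh : ℕ) (aa ρ ah ρh : ℕ → ℝ) (z : ℂ) : ℂ :=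
  (σ : ℂ) ^ 2 * z ^ 2 / 2 + (A : ℂ) * z
    + z * ∑ ℓ ∈ Finset.Icc 1 N, (aa ℓ : ℂ) / ((ρ ℓ : ℂ) - z)
    - z * ∑ ℓ ∈ Finset.Icc 1 Nh, (ah ℓ : ℂ) / ((ρh ℓ : ℂ) + z)

open Set Filter Topology

theorem IsPreconnected.existsUnique_eq_of_injOn {X Y : Type*} [TopologicalSpace X]
    [TopologicalSpace Y] [LinearOrder Y] [OrderClosedTopology Y] {D : Set X} {f : X → Y}
    (hD : IsPreconnected D) (hinj : InjOn f D) (hcont : ContinuousOn f D) {u v : X} {y : Y}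
    (hu : u ∈ D) (hv : v ∈ D) (hy : y ∈ Icc (f u) (f v)) : ∃! x, x ∈ D ∧ f x = y := by
  obtain ⟨x, hx, rfl⟩ := hD.intermediate_value hu hv hcont hy
  exact ⟨x, ⟨hx, rfl⟩, fun x' hx' => hinj hx'.1 hx hx'.2⟩

theorem tendsto_div_sub_nhdsLT {C p : ℝ} (hC : 0 < C) :
    Tendsto (fun x => C / (p - x)) (𝓝[<] p) atTop := by
  have h : Tendsto (fun x => p - x) (𝓝[<] p) (𝓝[>] 0) :=
    tendsto_nhdsWithin_of_tendsto_nhds_of_eventually_within _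
      (by simpa using ((continuous_sub_left p).tendsto p).mono_left nhdsWithin_le_nhds)
      (eventually_nhdsWithin_of_forall fun x (hx : x < p) => sub_pos.2 hx)
  simpa [div_eq_mul_inv] using h.inv_tendsto_nhdsGT_zero.const_mul_atTop hC

theorem tendsto_div_sub_nhdsGT {C p : ℝ} (hC : 0 < C) :
    Tendsto (fun x => C / (p - x)) (𝓝[>] p) atBot := by
  have h : Tendsto (fun x => p - x) (𝓝[>] p) (𝓝[<] 0) :=
    tendsto_nhdsWithin_of_tendsto_nhds_of_eventually_within _
      (by simpa using ((continuous_sub_left p).tendsto p).mono_left nhdsWithin_le_nhds)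
      (eventually_nhdsWithin_of_forall fun x (hx : p < x) => sub_neg.2 hx)
  simpa [div_eq_mul_inv] using h.inv_tendsto_nhdsLT_zero.const_mul_atBot hC

section PickFunction

variable {ι 𝕜 : Type*} [RCLike 𝕜] (α β : ℝ) (s : Finset ι) (b c : ι → ℝ)

noncomputable def pickFunction (z : 𝕜) : 𝕜 :=
  α * z + β + ∑ i ∈ s, (c i : 𝕜) / (b i - z)

theorem pickFunction_real (x : ℝ) :
    pickFunction α β s b c x = α * x + β + ∑ i ∈ s, c i / (b i - x) := by
  simp [pickFunction]

@[simp, norm_cast]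
theorem pickFunction_ofReal (x : ℝ) :
    pickFunction α β s b c (x : ℂ) = ((pickFunction α β s b c x : ℝ) : ℂ) := by
  simp [pickFunction]

theorem hasDerivAt_pickFunction {z : 𝕜} (hz : ∀ i ∈ s, (b i : 𝕜) ≠ z) :
    HasDerivAt (pickFunction α β s b c) (α + ∑ i ∈ s, (c i : 𝕜) / (b i - z) ^ 2) z := by
  have hterm : ∀ i ∈ s,
      HasDerivAt (fun w : 𝕜 => (c i : 𝕜) / (b i - w)) ((c i : 𝕜) / (b i - z) ^ 2) z := by
    intro i hi
    have h := ((hasDerivAt_const z (b i : 𝕜)).sub (hasDerivAt_id z)).fun_inv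
      (sub_ne_zero.2 (hz i hi)) |>.const_mul (c i : 𝕜)
    simpa [div_eq_mul_inv] using h
  have h := (((hasDerivAt_id z).const_mul (α : 𝕜)).add_const (β : 𝕜)).add (HasDerivAt.fun_sum hterm)
  simp only [mul_one] at h
  exact h

theorem pickFunction_im (z : ℂ) :
    (pickFunction α β s b c z).im = z.im * (α + ∑ i ∈ s, c i / Complex.normSq (b i - z)) := by
  simp [pickFunction, Complex.div_im, mul_add, Finset.mul_sum, neg_div, mul_div_assoc, mul_comm]

variable {α β s b c}

theorem im_eq_zero_of_pickFunction_eq_zero (hα : 0 ≤ α) (hc : ∀ i ∈ s, 0 < c i)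
    (hs : s.Nonempty) {z : ℂ} (hz : pickFunction α β s b c z = 0) : z.im = 0 := by
  by_contra him
  have hweight : 0 < α + ∑ i ∈ s, c i / Complex.normSq (b i - z) :=
    add_pos_of_nonneg_of_pos hα <| Finset.sum_pos (fun i hi => div_pos (hc i hi) <|
      Complex.normSq_pos.2 fun h => him <| by simpa using congrArg Complex.im h) hs
  have := congrArg Complex.im hz
  rw [pickFunction_im, Complex.zero_im] at this
  exact him ((mul_eq_zero.1 this).resolve_right hweight.ne')

theorem hasDerivAt_pickFunction_real {x : ℝ} (hx : ∀ i ∈ s, b i ≠ x) :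
    HasDerivAt (pickFunction α β s b c) (α + ∑ i ∈ s, c i / (b i - x) ^ 2) x := by
  simpa using hasDerivAt_pickFunction α β s b c (𝕜 := ℝ) hx

theorem hasDerivAt_pickFunction_ofReal {x : ℝ} (hx : ∀ i ∈ s, b i ≠ x) :
    HasDerivAt (pickFunction α β s b c)
      (((α + ∑ i ∈ s, c i / (b i - x) ^ 2 : ℝ)) : ℂ) x := by
  refine (hasDerivAt_pickFunction α β s b c fun i hi =>
    Complex.ofReal_injective.ne (hx i hi)).congr_deriv ?_
  push_cast
  rfl

theorem continuousOn_pickFunction {D : Set ℝ} (hD : ∀ i ∈ s, b i ∉ D) :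
    ContinuousOn (pickFunction α β s b c) D := fun _ hx =>
  (hasDerivAt_pickFunction_real fun i hi (h : b i = _) => hD i hi (h ▸ hx)).continuousAt
    |>.continuousWithinAt

theorem pickFunction_deriv_pos (hα : 0 ≤ α) (hc : ∀ i ∈ s, 0 < c i) (hs : s.Nonempty) {x : ℝ}
    (hx : ∀ i ∈ s, b i ≠ x) : 0 < α + ∑ i ∈ s, c i / (b i - x) ^ 2 :=
  add_pos_of_nonneg_of_pos hα <| Finset.sum_pos (fun i hi =>
    div_pos (hc i hi) (sq_pos_iff.2 (sub_ne_zero.2 (hx i hi)))) hs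

theorem strictMonoOn_pickFunction (hα : 0 ≤ α) (hc : ∀ i ∈ s, 0 < c i) (hs : s.Nonempty)
    {D : Set ℝ} (hD : Convex ℝ D) (hpoles : ∀ i ∈ s, b i ∉ D) :
    StrictMonoOn (pickFunction α β s b c) D := by
  refine strictMonoOn_of_deriv_pos hD (continuousOn_pickFunction hpoles) fun x hx => ?_
  have hne : ∀ i ∈ s, b i ≠ x := fun i hi (h : b i = _) => hpoles i hi (h ▸ interior_subset hx)
  rw [(hasDerivAt_pickFunction_real hne).deriv]
  exact pickFunction_deriv_pos hα hc hs hne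

theorem pickFunction_eq_div_add (p x : ℝ) :
    pickFunction α β s b c x =
      (∑ i ∈ s with b i = p, c i) / (p - x) + pickFunction α β {i ∈ s | b i ≠ p} b c x := by
  simp only [pickFunction_real, Finset.sum_div]
  rw [← Finset.sum_filter_add_sum_filter_not s (b · = p)]
  rw [Finset.sum_congr rfl fun i hi => by rw [(Finset.mem_filter.1 hi).2]]
  ring

theorem tendsto_pickFunction_nhdsLT_nhdsGT (hc : ∀ i ∈ s, 0 < c i) {p : ℝ} (hp : ∃ j ∈ s, b j = p) :
    Tendsto (pickFunction α β s b c) (𝓝[<] p) atTop ∧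
      Tendsto (pickFunction α β s b c) (𝓝[>] p) atBot := by
  obtain ⟨j, hj, rfl⟩ := hp
  have hC : 0 < ∑ i ∈ s with b i = b j, c i :=
    Finset.sum_pos (fun i hi => hc i (Finset.mem_filter.1 hi).1) ⟨j, Finset.mem_filter.2 ⟨hj, rfl⟩⟩
  have hrest : ContinuousAt (pickFunction α β {i ∈ s | b i ≠ b j} b c) (b j) :=
    (hasDerivAt_pickFunction_real fun i hi => (Finset.mem_filter.1 hi).2).continuousAt
  simp only [funext (pickFunction_eq_div_add (α := α) (β := β) (s := s) (c := c) (b j))]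
  exact ⟨(tendsto_div_sub_nhdsLT hC).atTop_add (hrest.tendsto.mono_left nhdsWithin_le_nhds),
    (tendsto_div_sub_nhdsGT hC).atBot_add (hrest.tendsto.mono_left nhdsWithin_le_nhds)⟩

theorem tendsto_pickFunction_sub_mul_atTop :
    Tendsto (fun x => pickFunction α β s b c x - α * x) atTop (𝓝 β) := by
  have h : Tendsto (fun x : ℝ => ∑ i ∈ s, c i / (b i - x)) atTop (𝓝 0) := by
    simpa [sub_eq_add_neg] using tendsto_finsetSum s fun i _ => tendsto_const_nhds.div_atBot
      (tendsto_atBot_add_const_left _ (b i) tendsto_neg_atTop_atBot)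
  simpa using (h.const_add β).congr fun x => by rw [pickFunction_real]; ring

theorem eventually_pickFunction_pos_atTop (hα : 0 ≤ α) (hαβ : 0 < α ∨ 0 < β) :
    ∀ᶠ x : ℝ in atTop, 0 < pickFunction α β s b c x := by
  have hlim := tendsto_pickFunction_sub_mul_atTop (α := α) (β := β) (s := s) (b := b) (c := c)
  rcases hαβ with hα' | hβ
  · refine ((tendsto_id.const_mul_atTop hα').atTop_add hlim).eventually_gt_atTop 0 |>.mono ?_
    simp
  · filter_upwards [hlim.eventually_const_lt hβ, eventually_ge_atTop 0] with x hx hx0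
    nlinarith

theorem pickFunction_neg_of_forall_lt (hc : ∀ i ∈ s, 0 < c i) (hs : s.Nonempty) (hβ : β ≤ 0)
    {x : ℝ} (hx : ∀ i ∈ s, b i < x) : pickFunction 0 β s b c x < 0 := by
  have : ∑ i ∈ s, c i / (b i - x) < 0 :=
    Finset.sum_neg (fun i hi => div_neg_of_pos_of_neg (hc i hi) (sub_neg.2 (hx i hi))) hs
  rw [pickFunction_real]
  linarith

theorem existsUnique_pickFunction_eq_zero_Ioo (hα : 0 ≤ α) (hc : ∀ i ∈ s, 0 < c i)
    {p p' : ℝ} (hp : ∃ j ∈ s, b j = p) (hp' : ∃ j ∈ s, b j = p') (hpp' : p < p')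
    (hgap : ∀ i ∈ s, b i ∉ Ioo p p') :
    ∃! x, x ∈ Ioo p p' ∧ pickFunction α β s b c x = 0 := by
  have hs : s.Nonempty := let ⟨j, hj, _⟩ := hp; ⟨j, hj⟩
  obtain ⟨u, hfu, hu⟩ := (((tendsto_pickFunction_nhdsLT_nhdsGT hc hp).2.eventually_lt_atBot 0).and
    (Ioo_mem_nhdsGT hpp')).exists
  obtain ⟨v, hfv, hv⟩ := (((tendsto_pickFunction_nhdsLT_nhdsGT hc hp').1.eventually_gt_atTop 0).and
    (Ioo_mem_nhdsLT hpp')).exists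
  exact isPreconnected_Ioo.existsUnique_eq_of_injOn
    (strictMonoOn_pickFunction hα hc hs (convex_Ioo p p') hgap).injOn
    (continuousOn_pickFunction hgap) hu hv ⟨hfu.le, hfv.le⟩

theorem existsUnique_pickFunction_eq_zero_Ioi (hα : 0 ≤ α) (hc : ∀ i ∈ s, 0 < c i)
    {p : ℝ} (hp : ∃ j ∈ s, b j = p) (hgap : ∀ i ∈ s, b i ≤ p) (hαβ : 0 < α ∨ 0 < β) :
    ∃! x, x ∈ Ioi p ∧ pickFunction α β s b c x = 0 := by
  have hs : s.Nonempty := let ⟨j, hj, _⟩ := hp; ⟨j, hj⟩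
  have hgap' : ∀ i ∈ s, b i ∉ Ioi p := fun i hi => not_lt.2 (hgap i hi)
  obtain ⟨u, hfu, hu⟩ := (((tendsto_pickFunction_nhdsLT_nhdsGT hc hp).2.eventually_lt_atBot 0).and
    self_mem_nhdsWithin).exists
  obtain ⟨v, hfv, hv⟩ := ((eventually_pickFunction_pos_atTop hα hαβ).and
    (eventually_gt_atTop p)).exists
  exact isPreconnected_Ioi.existsUnique_eq_of_injOn
    (strictMonoOn_pickFunction hα hc hs (convex_Ioi p) hgap').injOn
    (continuousOn_pickFunction hgap') hu hv ⟨hfu.le, hfv.le⟩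

end PickFunction

theorem exists_mem_Ioo_or_lt {α : Type*} [LinearOrder α] (a : ℕ → α) {x : α} (N : ℕ)
    (h0 : a 0 < x) (hne : ∀ ℓ ∈ Finset.Icc 1 N, x ≠ a ℓ) :
    (∃ ℓ ∈ Finset.Icc 1 N, x ∈ Ioo (a (ℓ - 1)) (a ℓ)) ∨ a N < x := by
  induction N with
  | zero => exact Or.inr h0
  | succ n ih =>
    rcases lt_or_ge (a (n + 1)) x with hlt | hle
    · exact Or.inr hlt
    have hlt : x < a (n + 1) := hle.lt_of_ne (hne _ (by simp))
    rcases ih fun ℓ hℓ => hne ℓ (Finset.Icc_subset_Icc_right n.le_succ hℓ) with ⟨ℓ, hℓ, hx⟩ | hx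
    · exact Or.inl ⟨ℓ, Finset.Icc_subset_Icc_right n.le_succ hℓ, hx⟩
    · exact Or.inl ⟨n + 1, by simp, hx, hlt⟩

structure IsHyperexpData (N Nh : ℕ) (aa ρ ah ρh : ℕ → ℝ) : Prop where
  weight_pos : ∀ ℓ ∈ Finset.Icc 1 N, 0 < aa ℓ
  weight_pos' : ∀ ℓ ∈ Finset.Icc 1 Nh, 0 < ah ℓ
  rate_zero : ρ 0 = 0
  rate_zero' : ρh 0 = 0
  strictMonoOn_rate : StrictMonoOn ρ (Iic N)
  strictMonoOn_rate' : StrictMonoOn ρh (Iic Nh)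

def hyperexpPoleIndex (N Nh : ℕ) : Finset (Option (ℕ ⊕ ℕ)) :=
  Finset.insertNone ((Finset.Icc 1 N).disjSum (Finset.Icc 1 Nh))

def hyperexpPole (ρ ρh : ℕ → ℝ) : Option (ℕ ⊕ ℕ) → ℝ
  | none => 0
  | some (.inl ℓ) => ρ ℓ
  | some (.inr ℓ) => -ρh ℓ

def hyperexpWeight (q : ℝ) (aa ah : ℕ → ℝ) : Option (ℕ ⊕ ℕ) → ℝ
  | none => q
  | some (.inl ℓ) => aa ℓ
  | some (.inr ℓ) => ah ℓ

/-- Dividing `ψ - q` by `z` turns the constant `-q` into a pole at `0` of weight `q`, and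
`-ah / (ρh + z)` is `ah / (-ρh - z)`: all poles of `(ψ(z) - q) / z` carry positive weight. -/
noncomputable abbrev hyperexpPick {𝕜 : Type*} [RCLike 𝕜] (σ A : ℝ) (N Nh : ℕ)
    (aa ρ ah ρh : ℕ → ℝ) (q : ℝ) : 𝕜 → 𝕜 :=
  pickFunction (σ ^ 2 / 2) A (hyperexpPoleIndex N Nh) (hyperexpPole ρ ρh) (hyperexpWeight q aa ah)

section Hyperexp

variable {σ A : ℝ} {N Nh : ℕ} {aa ρ ah ρh : ℕ → ℝ} {q : ℝ}

theorem IsHyperexpData.swap (h : IsHyperexpData N Nh aa ρ ah ρh) :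
    IsHyperexpData Nh N ah ρh aa ρ :=
  ⟨h.weight_pos', h.weight_pos, h.rate_zero', h.rate_zero, h.strictMonoOn_rate',
    h.strictMonoOn_rate⟩

theorem IsHyperexpData.rate_nonneg (h : IsHyperexpData N Nh aa ρ ah ρh) {m : ℕ} (hm : m ≤ N) :
    0 ≤ ρ m :=
  h.rate_zero ▸ h.strictMonoOn_rate.monotoneOn (Nat.zero_le N) hm (Nat.zero_le m)

theorem none_mem_hyperexpPoleIndex : none ∈ hyperexpPoleIndex N Nh := by
  simp [hyperexpPoleIndex]

theorem psi_eq_add_mul_hyperexpPick {z : ℂ} (hz : z ≠ 0) :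
    psi σ A N Nh aa ρ ah ρh z = q + z * hyperexpPick σ A N Nh aa ρ ah ρh q z := by
  have hneg : ∀ ℓ, (ah ℓ : ℂ) / ((ρh ℓ : ℂ) + z) = -((ah ℓ : ℂ) / ((-ρh ℓ : ℝ) - z)) := by
    intro ℓ
    rw [← div_neg]
    push_cast
    ring_nf
  simp only [psi, hyperexpPick, pickFunction, hyperexpPoleIndex, Finset.sum_insertNone,
    Finset.sum_disjSum, hyperexpPole, hyperexpWeight, hneg, Finset.sum_neg_distrib,
    RCLike.ofReal_eq_complex_ofReal]
  push_cast
  field_simp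
  ring

theorem psi_ofReal_eq_iff {x : ℝ} (hx : x ≠ 0) :
    psi σ A N Nh aa ρ ah ρh x = q ↔ hyperexpPick σ A N Nh aa ρ ah ρh q x = 0 := by
  rw [psi_eq_add_mul_hyperexpPick (Complex.ofReal_ne_zero.2 hx), add_eq_left]
  simp [hx, hyperexpPick]

theorem psi_neg (z : ℂ) : psi σ A N Nh aa ρ ah ρh (-z) = psi σ (-A) Nh N ah ρh aa ρ z := by
  simp only [psi, Complex.ofReal_neg]
  ring_nf

theorem psi_ne_zero_of_eq (hq : 0 < q) {z : ℂ} (hz : psi σ A N Nh aa ρ ah ρh z = q) : z ≠ 0 := by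
  rintro rfl
  exact hq.ne' (by simpa [psi] using hz.symm)

theorem hyperexpWeight_pos (h : IsHyperexpData N Nh aa ρ ah ρh) (hq : 0 < q) :
    ∀ i ∈ hyperexpPoleIndex N Nh, 0 < hyperexpWeight q aa ah i := by
  rintro (_ | ℓ | ℓ) hi
  · exact hq
  · exact h.weight_pos ℓ (by simpa [hyperexpPoleIndex] using hi)
  · exact h.weight_pos' ℓ (by simpa [hyperexpPoleIndex] using hi)

theorem exists_hyperexpPole_eq_rate (h : IsHyperexpData N Nh aa ρ ah ρh) {ℓ : ℕ} (hℓ : ℓ ≤ N) :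
    ∃ i ∈ hyperexpPoleIndex N Nh, hyperexpPole ρ ρh i = ρ ℓ := by
  rcases ℓ.eq_zero_or_pos with rfl | hℓ0
  · exact ⟨none, none_mem_hyperexpPoleIndex, by simp [hyperexpPole, h.rate_zero]⟩
  · exact ⟨some (.inl ℓ), by simp [hyperexpPoleIndex]; omega, rfl⟩

theorem hyperexpPole_nonpos_or_eq_rate (h : IsHyperexpData N Nh aa ρ ah ρh) :
    ∀ i ∈ hyperexpPoleIndex N Nh,
      hyperexpPole ρ ρh i ≤ 0 ∨ ∃ m ∈ Finset.Icc 1 N, hyperexpPole ρ ρh i = ρ m := by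
  simp only [hyperexpPoleIndex, Finset.mem_insertNone, Option.forall, Sum.forall]
  refine ⟨fun _ => Or.inl le_rfl, fun m hm => Or.inr ⟨m, by simpa using hm, rfl⟩,
    fun m hm => Or.inl ?_⟩
  simpa [hyperexpPole] using h.swap.rate_nonneg (by simp at hm; omega)

theorem hyperexpPole_notMem_Ioo (h : IsHyperexpData N Nh aa ρ ah ρh) {ℓ : ℕ}
    (hℓ : ℓ ∈ Finset.Icc 1 N) :
    ∀ i ∈ hyperexpPoleIndex N Nh, hyperexpPole ρ ρh i ∉ Ioo (ρ (ℓ - 1)) (ρ ℓ) := by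
  obtain ⟨hℓ1, hℓN⟩ := Finset.mem_Icc.1 hℓ
  have hmono := h.strictMonoOn_rate.monotoneOn
  intro i hi ⟨hlo, hhi⟩
  rcases hyperexpPole_nonpos_or_eq_rate h i hi with hle | ⟨m, hm, heq⟩
  · exact (hle.trans (h.rate_nonneg (by omega))).not_gt hlo
  · obtain ⟨-, hmN⟩ := Finset.mem_Icc.1 hm
    rw [heq] at hlo hhi
    rcases le_or_gt m (ℓ - 1) with hml | hml
    · exact (hmono (show m ≤ N by omega) (show ℓ - 1 ≤ N by omega) hml).not_gt hlo
    · exact (hmono (show ℓ ≤ N from hℓN) (show m ≤ N from hmN) (by omega)).not_gt hhi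

theorem hyperexpPole_le_rate (h : IsHyperexpData N Nh aa ρ ah ρh) :
    ∀ i ∈ hyperexpPoleIndex N Nh, hyperexpPole ρ ρh i ≤ ρ N := by
  intro i hi
  rcases hyperexpPole_nonpos_or_eq_rate h i hi with hle | ⟨m, hm, heq⟩
  · exact hle.trans (h.rate_nonneg le_rfl)
  · have hmN := (Finset.mem_Icc.1 hm).2
    exact heq ▸ h.strictMonoOn_rate.monotoneOn hmN self_mem_Iic hmN

theorem mem_and_psi_eq_iff {D : Set ℝ} (hD : ∀ i ∈ hyperexpPoleIndex N Nh, hyperexpPole ρ ρh i ∉ D)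
    (x : ℝ) : x ∈ D ∧ psi σ A N Nh aa ρ ah ρh x = q ↔
      x ∈ D ∧ hyperexpPick σ A N Nh aa ρ ah ρh q x = 0 :=
  and_congr_right fun hx => psi_ofReal_eq_iff fun h0 =>
    hD none none_mem_hyperexpPoleIndex (by simpa [hyperexpPole, h0] using hx)

theorem existsUnique_psi_eq_Ioo (h : IsHyperexpData N Nh aa ρ ah ρh) (hq : 0 < q) {ℓ : ℕ}
    (hℓ : ℓ ∈ Finset.Icc 1 N) :
    ∃! x : ℝ, x ∈ Ioo (ρ (ℓ - 1)) (ρ ℓ) ∧ psi σ A N Nh aa ρ ah ρh x = q := by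
  obtain ⟨hℓ1, hℓN⟩ := Finset.mem_Icc.1 hℓ
  rw [existsUnique_congr (mem_and_psi_eq_iff (hyperexpPole_notMem_Ioo h hℓ))]
  exact existsUnique_pickFunction_eq_zero_Ioo (by positivity) (hyperexpWeight_pos h hq)
    (exists_hyperexpPole_eq_rate h (by omega)) (exists_hyperexpPole_eq_rate h hℓN)
    (h.strictMonoOn_rate (show ℓ - 1 ≤ N by omega) (show ℓ ≤ N from hℓN) (by omega))
    (hyperexpPole_notMem_Ioo h hℓ)

theorem existsUnique_psi_eq_Ioi (h : IsHyperexpData N Nh aa ρ ah ρh) (hq : 0 < q)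
    (hσA : 0 < σ ∨ σ = 0 ∧ 0 < A) :
    ∃! x : ℝ, x ∈ Ioi (ρ N) ∧ psi σ A N Nh aa ρ ah ρh x = q := by
  have hgap : ∀ i ∈ hyperexpPoleIndex N Nh, hyperexpPole ρ ρh i ∉ Ioi (ρ N) :=
    fun i hi => not_lt.2 (hyperexpPole_le_rate h i hi)
  rw [existsUnique_congr (mem_and_psi_eq_iff hgap)]
  refine existsUnique_pickFunction_eq_zero_Ioi (by positivity) (hyperexpWeight_pos h hq)
    (exists_hyperexpPole_eq_rate h le_rfl) (hyperexpPole_le_rate h) ?_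
  rcases hσA with hσ | ⟨-, hA⟩
  · exact Or.inl (by positivity)
  · exact Or.inr hA

theorem psi_ne_of_rate_lt (hσ : 0 ≤ σ) (h : IsHyperexpData N Nh aa ρ ah ρh) (hq : 0 < q)
    (hσA : ¬(0 < σ ∨ σ = 0 ∧ 0 < A)) {x : ℝ} (hx : ρ N < x) :
    psi σ A N Nh aa ρ ah ρh x ≠ q := by
  simp only [not_or, not_lt, not_and] at hσA
  obtain rfl : σ = 0 := le_antisymm hσA.1 hσ
  rw [Ne, psi_ofReal_eq_iff ((h.rate_nonneg le_rfl).trans_lt hx).ne']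
  have hpole : ∀ i ∈ hyperexpPoleIndex N Nh, hyperexpPole ρ ρh i < x :=
    fun i hi => (hyperexpPole_le_rate h i hi).trans_lt hx
  simpa [hyperexpPick] using (pickFunction_neg_of_forall_lt (hyperexpWeight_pos h hq)
    ⟨none, none_mem_hyperexpPoleIndex⟩ (hσA.2 rfl) hpole).ne

theorem mem_Ioo_or_Ioi_of_psi_eq (hσ : 0 ≤ σ) (h : IsHyperexpData N Nh aa ρ ah ρh) (hq : 0 < q)
    {x : ℝ} (hx : 0 < x) (hne : ∀ ℓ ∈ Finset.Icc 1 N, x ≠ ρ ℓ)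
    (hroot : psi σ A N Nh aa ρ ah ρh x = q) :
    (∃ ℓ ∈ Finset.Icc 1 N, x ∈ Ioo (ρ (ℓ - 1)) (ρ ℓ)) ∨
      ((0 < σ ∨ σ = 0 ∧ 0 < A) ∧ x ∈ Ioi (ρ N)) := by
  refine (exists_mem_Ioo_or_lt ρ N (h.rate_zero ▸ hx) hne).imp_right fun hxN => ⟨?_, hxN⟩
  by_contra hσA
  exact psi_ne_of_rate_lt hσ h hq hσA hxN hroot

theorem existsUnique_psi_eq_Ioo_neg (h : IsHyperexpData N Nh aa ρ ah ρh) (hq : 0 < q) {ℓ : ℕ}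
    (hℓ : ℓ ∈ Finset.Icc 1 Nh) :
    ∃! x : ℝ, x ∈ Ioo (-ρh ℓ) (-ρh (ℓ - 1)) ∧ psi σ A N Nh aa ρ ah ρh x = q :=
  ((Equiv.neg ℝ).existsUnique_congr fun y => by simp [psi_neg, and_comm]).1
    (existsUnique_psi_eq_Ioo (σ := σ) (A := -A) h.swap hq hℓ)

theorem existsUnique_psi_eq_Iio (h : IsHyperexpData N Nh aa ρ ah ρh) (hq : 0 < q)
    (hσA : 0 < σ ∨ σ = 0 ∧ A < 0) :
    ∃! x : ℝ, x ∈ Iio (-ρh Nh) ∧ psi σ A N Nh aa ρ ah ρh x = q :=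
  ((Equiv.neg ℝ).existsUnique_congr fun y => by simp [psi_neg]).1
    (existsUnique_psi_eq_Ioi (σ := σ) (A := -A) h.swap hq (by simpa using hσA))

theorem psi_ne_of_lt_neg_rate (hσ : 0 ≤ σ) (h : IsHyperexpData N Nh aa ρ ah ρh) (hq : 0 < q)
    (hσA : ¬(0 < σ ∨ σ = 0 ∧ A < 0)) {x : ℝ} (hx : x < -ρh Nh) :
    psi σ A N Nh aa ρ ah ρh x ≠ q := by
  simpa [psi_neg] using
    psi_ne_of_rate_lt (A := -A) hσ h.swap hq (by simpa using hσA) (lt_neg_of_lt_neg hx)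

theorem hyperexpPick_eq_zero_of_psi_eq {z : ℂ} (hz : z ≠ 0)
    (hroot : psi σ A N Nh aa ρ ah ρh z = q) : hyperexpPick σ A N Nh aa ρ ah ρh q z = 0 := by
  rw [psi_eq_add_mul_hyperexpPick hz, add_eq_left] at hroot
  exact (mul_eq_zero.1 hroot).resolve_left hz

theorem exists_eq_ofReal_of_psi_eq (h : IsHyperexpData N Nh aa ρ ah ρh) (hq : 0 < q) {z : ℂ}
    (hroot : psi σ A N Nh aa ρ ah ρh z = q) : ∃ x : ℝ, z = x := by
  have him := im_eq_zero_of_pickFunction_eq_zero (by positivity) (hyperexpWeight_pos h hq)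
    ⟨none, none_mem_hyperexpPoleIndex⟩
    (hyperexpPick_eq_zero_of_psi_eq (psi_ne_zero_of_eq hq hroot) hroot)
  exact ⟨z.re, Complex.ext rfl (by simpa using him)⟩

theorem deriv_psi_ne_zero (h : IsHyperexpData N Nh aa ρ ah ρh) (hq : 0 < q) {x : ℝ}
    (hρ : ∀ ℓ ∈ Finset.Icc 1 N, (x : ℂ) ≠ ρ ℓ)
    (hρh : ∀ ℓ ∈ Finset.Icc 1 Nh, (x : ℂ) ≠ -(ρh ℓ : ℂ))
    (hroot : psi σ A N Nh aa ρ ah ρh x = q) : deriv (psi σ A N Nh aa ρ ah ρh) x ≠ 0 := by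
  have hx0 : (x : ℂ) ≠ 0 := psi_ne_zero_of_eq hq hroot
  have hpoles : ∀ i ∈ hyperexpPoleIndex N Nh, hyperexpPole ρ ρh i ≠ x := by
    rintro (_ | ℓ | ℓ) hi
    · exact_mod_cast hx0.symm
    · exact_mod_cast (hρ ℓ (by simpa [hyperexpPoleIndex] using hi)).symm
    · exact_mod_cast (hρh ℓ (by simpa [hyperexpPoleIndex] using hi)).symm
  have hF := hasDerivAt_pickFunction_ofReal (α := σ ^ 2 / 2) (β := A) (c := hyperexpWeight q aa ah)
    hpoles
  have hpsi : HasDerivAt (psi σ A N Nh aa ρ ah ρh) _ x :=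
    (((hasDerivAt_id (x : ℂ)).mul hF).const_add (q : ℂ)).congr_of_eventuallyEq
    ((eventually_ne_nhds hx0).mono fun z hz => psi_eq_add_mul_hyperexpPick hz)
  have hF0 : pickFunction _ _ _ _ _ (x : ℂ) = 0 := hyperexpPick_eq_zero_of_psi_eq hx0 hroot
  rw [hpsi.deriv, hF0, mul_zero, zero_add, id]
  exact mul_ne_zero hx0 <| Complex.ofReal_ne_zero.2 <| ne_of_gt <| pickFunction_deriv_pos
    (by positivity) (hyperexpWeight_pos h hq) ⟨none, none_mem_hyperexpPoleIndex⟩ hpoles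

theorem mem_intervals_of_psi_eq (hσ : 0 ≤ σ) (h : IsHyperexpData N Nh aa ρ ah ρh) (hq : 0 < q)
    {x : ℝ} (hρ : ∀ ℓ ∈ Finset.Icc 1 N, (x : ℂ) ≠ ρ ℓ)
    (hρh : ∀ ℓ ∈ Finset.Icc 1 Nh, (x : ℂ) ≠ -(ρh ℓ : ℂ))
    (hroot : psi σ A N Nh aa ρ ah ρh x = q) :
    (∃ ℓ ∈ Finset.Icc 1 N, x ∈ Ioo (ρ (ℓ - 1)) (ρ ℓ)) ∨
      (∃ ℓ ∈ Finset.Icc 1 Nh, x ∈ Ioo (-ρh ℓ) (-ρh (ℓ - 1))) ∨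
      ((0 < σ ∨ σ = 0 ∧ 0 < A) ∧ x ∈ Ioi (ρ N)) ∨
      ((0 < σ ∨ σ = 0 ∧ A < 0) ∧ x ∈ Iio (-ρh Nh)) := by
  have hx0 : x ≠ 0 := by exact_mod_cast psi_ne_zero_of_eq hq hroot
  rcases hx0.lt_or_gt with hneg | hpos
  · rcases mem_Ioo_or_Ioi_of_psi_eq (A := -A) hσ h.swap hq (neg_pos.2 hneg)
        (fun ℓ hℓ hx => hρh ℓ hℓ (by simp [← hx])) (by simpa [psi_neg] using hroot) with
      ⟨ℓ, hℓ, hmem⟩ | ⟨hσA, hmem⟩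
    · exact Or.inr (Or.inl ⟨ℓ, hℓ, by simpa [lt_neg, neg_lt, and_comm] using hmem⟩)
    · exact Or.inr (Or.inr (Or.inr ⟨by simpa using hσA, by simpa [lt_neg] using hmem⟩))
  · rcases mem_Ioo_or_Ioi_of_psi_eq hσ h hq hpos (fun ℓ hℓ => by exact_mod_cast hρ ℓ hℓ) hroot with
      hmem | hmem
    · exact Or.inl hmem
    · exact Or.inr (Or.inr (Or.inl hmem))

end Hyperexp

theorem hyperexponential_roots_real_simple_interlacing_general
    (σ A : ℝ) (N Nh : ℕ) (aa ρ ah ρh : ℕ → ℝ)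
    (hσ : 0 ≤ σ)
    (hpos : ∀ ℓ ∈ Finset.Icc 1 N, 0 < aa ℓ)
    (hposh : ∀ ℓ ∈ Finset.Icc 1 Nh, 0 < ah ℓ)
    (hρ0 : ρ 0 = 0) (hρh0 : ρh 0 = 0)
    (hmono : ∀ i j, i < j → j ≤ N → ρ i < ρ j)
    (hmonoh : ∀ i j, i < j → j ≤ Nh → ρh i < ρh j)
    (q : ℝ) (hq : 0 < q) :
    -- every solution (away from the poles) is real, is a simple zero of ψ - q,
    -- and lies in one of the prescribed intervals
    (∀ z : ℂ,
      (∀ ℓ ∈ Finset.Icc 1 N, z ≠ (ρ ℓ : ℂ)) →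
      (∀ ℓ ∈ Finset.Icc 1 Nh, z ≠ (-(ρh ℓ : ℝ) : ℂ)) →
      psi σ A N Nh aa ρ ah ρh z = (q : ℂ) →
      deriv (psi σ A N Nh aa ρ ah ρh) z ≠ 0 ∧
      ∃ x : ℝ, z = (x : ℂ) ∧
        ((∃ ℓ ∈ Finset.Icc 1 N, x ∈ Set.Ioo (ρ (ℓ - 1)) (ρ ℓ)) ∨
         (∃ ℓ ∈ Finset.Icc 1 Nh, x ∈ Set.Ioo (-(ρh ℓ)) (-(ρh (ℓ - 1)))) ∨
         ((0 < σ ∨ (σ = 0 ∧ 0 < A)) ∧ x ∈ Set.Ioi (ρ N)) ∨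
         ((0 < σ ∨ (σ = 0 ∧ A < 0)) ∧ x ∈ Set.Iio (-(ρh Nh))))) ∧
    -- exactly one solution in each interval (ρ_{ℓ-1}, ρ_ℓ)
    (∀ ℓ ∈ Finset.Icc 1 N, ∃! x : ℝ,
        x ∈ Set.Ioo (ρ (ℓ - 1)) (ρ ℓ) ∧ psi σ A N Nh aa ρ ah ρh (x : ℂ) = (q : ℂ)) ∧
    -- exactly one solution in each interval (-ρ̂_ℓ, -ρ̂_{ℓ-1})
    (∀ ℓ ∈ Finset.Icc 1 Nh, ∃! x : ℝ,
        x ∈ Set.Ioo (-(ρh ℓ)) (-(ρh (ℓ - 1))) ∧ psi σ A N Nh aa ρ ah ρh (x : ℂ) = (q : ℂ)) ∧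
    -- exactly one solution in (ρ_N, ∞) iff σ > 0 or (σ = 0 and a > 0)
    ((0 < σ ∨ (σ = 0 ∧ 0 < A)) →
        ∃! x : ℝ, x ∈ Set.Ioi (ρ N) ∧ psi σ A N Nh aa ρ ah ρh (x : ℂ) = (q : ℂ)) ∧
    (¬(0 < σ ∨ (σ = 0 ∧ 0 < A)) →
        ¬∃ x : ℝ, x ∈ Set.Ioi (ρ N) ∧ psi σ A N Nh aa ρ ah ρh (x : ℂ) = (q : ℂ)) ∧
    -- exactly one solution in (-∞, -ρ̂_N̂) iff σ > 0 or (σ = 0 and a < 0)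
    ((0 < σ ∨ (σ = 0 ∧ A < 0)) →
        ∃! x : ℝ, x ∈ Set.Iio (-(ρh Nh)) ∧ psi σ A N Nh aa ρ ah ρh (x : ℂ) = (q : ℂ)) ∧
    (¬(0 < σ ∨ (σ = 0 ∧ A < 0)) →
        ¬∃ x : ℝ, x ∈ Set.Iio (-(ρh Nh)) ∧ psi σ A N Nh aa ρ ah ρh (x : ℂ) = (q : ℂ)) := by
  have h : IsHyperexpData N Nh aa ρ ah ρh := ⟨hpos, hposh, hρ0, hρh0,
    fun i _ j hj hij => hmono i j hij hj, fun i _ j hj hij => hmonoh i j hij hj⟩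
  refine ⟨fun z hz hzh hroot => ?_, fun ℓ hℓ => existsUnique_psi_eq_Ioo h hq hℓ,
    fun ℓ hℓ => existsUnique_psi_eq_Ioo_neg h hq hℓ, existsUnique_psi_eq_Ioi h hq,
    fun hσA ⟨x, hx, hroot⟩ => psi_ne_of_rate_lt hσ h hq hσA hx hroot,
    existsUnique_psi_eq_Iio h hq,
    fun hσA ⟨x, hx, hroot⟩ => psi_ne_of_lt_neg_rate hσ h hq hσA hx hroot⟩
  obtain ⟨x, rfl⟩ := exists_eq_ofReal_of_psi_eq h hq hroot
  exact ⟨deriv_psi_ne_zero h hq hz hzh hroot, x, rfl, mem_intervals_of_psi_eq hσ h hq hz hzh hroot⟩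

/-- Interlacing property: for `q > 0` all solutions of `ψ(z) = q` are real and simple, there
is exactly one in each interval `(ρ_{ℓ-1}, ρ_ℓ)` and `(-ρ̂_ℓ, -ρ̂_{ℓ-1})`, exactly one in
`(ρ_N, ∞)` iff `σ > 0` or (`σ = 0` and `a > 0`), exactly one in `(-∞, -ρ̂_N̂)` iff `σ > 0` or
(`σ = 0` and `a < 0`), and there are no other solutions. -/
theorem hyperexponential_roots_real_simple_interlacing
    (σ A : ℝ) (N Nh : ℕ) (aa ρ ah ρh : ℕ → ℝ)
    (hσ : 0 ≤ σ)
    (hpos : ∀ ℓ ∈ Finset.Icc 1 N, 0 < aa ℓ)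
    (hposh : ∀ ℓ ∈ Finset.Icc 1 Nh, 0 < ah ℓ)
    (hρ0 : ρ 0 = 0) (hρh0 : ρh 0 = 0)
    (hmono : ∀ i j, i < j → j ≤ N → ρ i < ρ j)
    (hmonoh : ∀ i j, i < j → j ≤ Nh → ρh i < ρh j)
    (hnondeg : 0 < σ ∨ A ≠ 0 ∨ 1 ≤ N + Nh)
    (q : ℝ) (hq : 0 < q) :
    -- every solution (away from the poles) is real, is a simple zero of ψ - q,
    -- and lies in one of the prescribed intervals
    (∀ z : ℂ,
      (∀ ℓ ∈ Finset.Icc 1 N, z ≠ (ρ ℓ : ℂ)) →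
      (∀ ℓ ∈ Finset.Icc 1 Nh, z ≠ (-(ρh ℓ : ℝ) : ℂ)) →
      psi σ A N Nh aa ρ ah ρh z = (q : ℂ) →
      deriv (psi σ A N Nh aa ρ ah ρh) z ≠ 0 ∧
      ∃ x : ℝ, z = (x : ℂ) ∧
        ((∃ ℓ ∈ Finset.Icc 1 N, x ∈ Set.Ioo (ρ (ℓ - 1)) (ρ ℓ)) ∨
         (∃ ℓ ∈ Finset.Icc 1 Nh, x ∈ Set.Ioo (-(ρh ℓ)) (-(ρh (ℓ - 1)))) ∨
         ((0 < σ ∨ (σ = 0 ∧ 0 < A)) ∧ x ∈ Set.Ioi (ρ N)) ∨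
         ((0 < σ ∨ (σ = 0 ∧ A < 0)) ∧ x ∈ Set.Iio (-(ρh Nh))))) ∧
    -- exactly one solution in each interval (ρ_{ℓ-1}, ρ_ℓ)
    (∀ ℓ ∈ Finset.Icc 1 N, ∃! x : ℝ,
        x ∈ Set.Ioo (ρ (ℓ - 1)) (ρ ℓ) ∧ psi σ A N Nh aa ρ ah ρh (x : ℂ) = (q : ℂ)) ∧
    -- exactly one solution in each interval (-ρ̂_ℓ, -ρ̂_{ℓ-1})
    (∀ ℓ ∈ Finset.Icc 1 Nh, ∃! x : ℝ,
        x ∈ Set.Ioo (-(ρh ℓ)) (-(ρh (ℓ - 1))) ∧ psi σ A N Nh aa ρ ah ρh (x : ℂ) = (q : ℂ)) ∧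
    -- exactly one solution in (ρ_N, ∞) iff σ > 0 or (σ = 0 and a > 0)
    ((0 < σ ∨ (σ = 0 ∧ 0 < A)) →
        ∃! x : ℝ, x ∈ Set.Ioi (ρ N) ∧ psi σ A N Nh aa ρ ah ρh (x : ℂ) = (q : ℂ)) ∧
    (¬(0 < σ ∨ (σ = 0 ∧ 0 < A)) →
        ¬∃ x : ℝ, x ∈ Set.Ioi (ρ N) ∧ psi σ A N Nh aa ρ ah ρh (x : ℂ) = (q : ℂ)) ∧
    -- exactly one solution in (-∞, -ρ̂_N̂) iff σ > 0 or (σ = 0 and a < 0)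
    ((0 < σ ∨ (σ = 0 ∧ A < 0)) →
        ∃! x : ℝ, x ∈ Set.Iio (-(ρh Nh)) ∧ psi σ A N Nh aa ρ ah ρh (x : ℂ) = (q : ℂ)) ∧
    (¬(0 < σ ∨ (σ = 0 ∧ A < 0)) →
        ¬∃ x : ℝ, x ∈ Set.Iio (-(ρh Nh)) ∧ psi σ A N Nh aa ρ ah ρh (x : ℂ) = (q : ℂ)) :=
  hyperexponential_roots_real_simple_interlacing_general σ A N Nh aa ρ ah ρh hσ hpos hposh hρ0 hρh0
    hmono hmonoh q hq
end

section
/- Assume σ > 0. Then there exist R > 0 and a sequence (c_i)_{i≥1} of real numbers with c_1 = σ/√2 such that the series ∑_{i=1}^∞ c_i q^{−i/2} converges absolutely for every q ∈ ℂ with |q| > R, and for every real q > R one has 1/ζ_{N+1}(q) = ∑_{i=1}^∞ c_i q^{−i/2} and 1/ζ̂_{N̂+1}(q) = −∑_{i=1}^∞ (−1)^i c_i q^{−i/2}. -/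
/-!
Substituting `z = 1 / u`, the function `F u = u² ψ(1/u)` is analytic at `0` with
`F 0 = σ² / 2 > 0`, so `G u = u / √(F u)` is analytic at `0` with `G' 0 = √2 / σ ≠ 0` and has a
local inverse given by a power series `∑ cᵢ wⁱ` with `c₁ = σ / √2`. A real root `x` of `ψ x = q`
satisfies `F (1/x) = (1/x)² q`, hence `G (1/x) = ± q^{-1/2}` with the sign of `x`, and `1/x` is
the inverse series at `± q^{-1/2}` as soon as `1/x` is small. It is, for large `q`: beyond the
poles every rational term of `ψ` is nonpositive, so `q = ψ x ≤ σ² x² / 2 + |A| |x|`.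
-/

open Topology Finset

theorem AnalyticAt.exists_hasSum_pow_sub_of_deriv_ne_zero {𝕜 : Type*} [NontriviallyNormedField 𝕜]
    [CompleteSpace 𝕜] [CharZero 𝕜] {f : 𝕜 → 𝕜} {x : 𝕜} (hf : AnalyticAt 𝕜 f x)
    (hf' : deriv f x ≠ 0) :
    ∃ δ > 0, ∃ a : ℕ → 𝕜, a 0 = x ∧ a 1 = (deriv f x)⁻¹ ∧
      Summable (fun n => ‖a n‖ * δ ^ n) ∧
      ∀ u, ‖u - x‖ < δ → HasSum (fun n => a n * (f u - f x) ^ n) u := by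
  set r := hf.hasStrictDerivAt.localInverse f _ x hf'
  obtain ⟨p, hp⟩ : AnalyticAt 𝕜 r (f x) := hf.analyticAt_localInverse hf'
  have hr : r (f x) = x := HasStrictFDerivAt.localInverse_apply_image ..
  have hsum : ∀ᶠ u in 𝓝 x, HasSum (fun n => p.coeff n * (f u - f x) ^ n) u := by
    filter_upwards [hf.continuousAt.eventually (hasFPowerSeriesAt_iff'.1 hp),
      hf.hasStrictDerivAt.eventually_left_inverse hf'] with u hu (hru : r (f u) = u)
    simpa only [smul_eq_mul, mul_comm, hru] using hu
  obtain ⟨ε, hε, hε_sum⟩ := Metric.eventually_nhds_iff.1 hsum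
  obtain ⟨δ, hδ, hδp⟩ := ENNReal.lt_iff_exists_nnreal_btwn.1 hp.radius_pos
  refine ⟨min ε δ, lt_min hε (by exact_mod_cast hδ), p.coeff, hr ▸ hp.coeff_zero 1, ?_, ?_,
    fun u hu => hε_sum ((dist_eq_norm u x).trans_lt (hu.trans_le (min_le_left _ _)))⟩
  · exact hp.deriv.symm.trans (hf.hasStrictDerivAt.to_localInverse hf').hasDerivAt.deriv
  · refine (p.summable_norm_mul_pow hδp).of_nonneg_of_le (fun n => by positivity) fun n => ?_
    rw [p.norm_apply_eq_norm_coef]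
    gcongr
    exact min_le_right _ _

theorem Complex.ofReal_cpow_one_half {s : ℝ} (hs : 0 ≤ s) : (s : ℂ) ^ (1 / 2 : ℂ) = (√s : ℝ) := by
  rw [Real.sqrt_eq_rpow, Complex.ofReal_cpow hs]
  norm_num

theorem exists_hasSum_pow_of_eq_div_sq {F : ℂ → ℂ} (hF : AnalyticAt ℂ F 0) {b : ℝ} (hb : 0 < b)
    (hF0 : F 0 = (b ^ 2 : ℝ)) :
    ∃ δ > 0, ∃ c : ℕ → ℝ, c 0 = 0 ∧ c 1 = b ∧ Summable (fun n => |c n| * δ ^ n) ∧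
      ∀ t w : ℝ, |t| < δ → 0 < t * w → F t = ((t / w) ^ 2 : ℝ) →
        HasSum (fun n => c n * w ^ n) t := by
  set φ : ℂ → ℂ := fun u => F u ^ (1 / 2 : ℂ)
  have hφ_ofReal : ∀ t s : ℝ, 0 ≤ s → F t = s → φ t = (√s : ℝ) := fun t s hs hFt => by
    simp only [φ, hFt, Complex.ofReal_cpow_one_half hs]
  have hφ0 : φ 0 = b := by
    have h := hφ_ofReal 0 (b ^ 2) (by positivity) (by simpa using hF0)
    rwa [Real.sqrt_sq hb.le, Complex.ofReal_zero] at h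
  have hφ : AnalyticAt ℂ φ 0 :=
    hF.cpow analyticAt_const (by rw [hF0]; exact Complex.ofReal_mem_slitPlane.2 (by positivity))
  have hφ0_ne : φ 0 ≠ 0 := by rw [hφ0]; exact_mod_cast hb.ne'
  set G : ℂ → ℂ := fun u => u * (φ u)⁻¹
  have hG : AnalyticAt ℂ G 0 := analyticAt_id.mul (hφ.inv hφ0_ne)
  have hG_deriv : deriv G 0 = b⁻¹ := by
    have h : HasDerivAt G (1 * (φ 0)⁻¹ + 0 * _) 0 :=
      (hasDerivAt_id 0).mul (hφ.inv hφ0_ne).differentiableAt.hasDerivAt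
    simp [h.deriv, hφ0]
  obtain ⟨δ, hδ, a, ha0, ha1, hsum, hinv⟩ :=
    hG.exists_hasSum_pow_sub_of_deriv_ne_zero (by simp [hG_deriv, hb.ne'])
  -- `t` and `w` are real, so the real parts of the coefficients already give a series for `t`.
  refine ⟨δ, hδ, fun n => (a n).re, by simp [ha0], by simp [ha1, hG_deriv], ?_, ?_⟩
  · exact hsum.of_nonneg_of_le (fun n => by positivity)
      fun n => mul_le_mul_of_nonneg_right (Complex.abs_re_le_norm _) (by positivity)
  · intro t w ht htw hFt
    have hGt : G t = w := by
      have htw' : 0 < t / w := div_pos_iff.2 (mul_pos_iff.1 htw)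
      simp only [G, hφ_ofReal t _ (by positivity) hFt, Real.sqrt_sq htw'.le]
      have ht0 : (t : ℂ) ≠ 0 := by exact_mod_cast left_ne_zero_of_mul htw.ne'
      push_cast
      field_simp
    have := Complex.hasSum_re (hinv t (by simpa using ht))
    simpa only [hGt, show G 0 = 0 by simp [G], sub_zero, ← Complex.ofReal_pow,
      Complex.re_mul_ofReal, Complex.ofReal_re] using this

theorem Real.rpow_neg_succ_div_two {x : ℝ} (hx : 0 ≤ x) (n : ℕ) :
    x ^ (-((n : ℝ) + 1) / 2) = (√x)⁻¹ ^ (n + 1) := by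
  rw [Real.sqrt_eq_rpow, ← Real.rpow_neg hx, ← Real.rpow_natCast, ← Real.rpow_mul hx]
  push_cast
  ring_nf

theorem Complex.ofReal_cpow_neg_succ_div_two {q : ℝ} (hq : 0 ≤ q) (n : ℕ) :
    (q : ℂ) ^ (-((n : ℂ) + 1) / 2) = (((√q)⁻¹ ^ (n + 1) : ℝ) : ℂ) := by
  rw [← Real.rpow_neg_succ_div_two hq, Complex.ofReal_cpow hq]
  push_cast
  rfl

theorem Complex.norm_cpow_neg_succ_div_two (q : ℂ) (n : ℕ) :
    ‖q ^ (-((n : ℂ) + 1) / 2)‖ = (√‖q‖)⁻¹ ^ (n + 1) := by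
  rw [← Real.rpow_neg_succ_div_two (norm_nonneg q), ← Complex.norm_cpow_real]
  push_cast
  rfl

theorem summable_norm_mul_cpow {c : ℕ → ℝ} {δ : ℝ} (hδ : 0 < δ)
    (hc : Summable fun n => |c n| * δ ^ n) {q : ℂ} (hq : δ⁻¹ ^ 2 < ‖q‖) :
    Summable fun n => ‖(c (n + 1) : ℂ) * q ^ (-((n : ℂ) + 1) / 2)‖ := by
  have hqδ : (√‖q‖)⁻¹ ≤ δ := by
    have hq0 : 0 < ‖q‖ := (by positivity : (0 : ℝ) < δ⁻¹ ^ 2).trans hq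
    rw [inv_le_comm₀ (by positivity) hδ, ← Real.sqrt_sq (inv_nonneg.2 hδ.le)]
    exact Real.sqrt_le_sqrt hq.le
  refine ((summable_nat_add_iff 1).2 hc).of_nonneg_of_le (fun n => norm_nonneg _) fun n => ?_
  rw [norm_mul, Complex.norm_cpow_neg_succ_div_two, Complex.norm_real, Real.norm_eq_abs]
  gcongr

theorem tsum_mul_cpow_eq_of_hasSum {c : ℕ → ℝ} {q s : ℝ} (hq : 0 ≤ q)
    (h : HasSum (fun n => c n * (√q)⁻¹ ^ (n + 1)) s) :
    ∑' n, (c n : ℂ) * (q : ℂ) ^ (-((n : ℂ) + 1) / 2) = s := by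
  simp_rw [Complex.ofReal_cpow_neg_succ_div_two hq]
  exact_mod_cast (Complex.hasSum_ofReal.2 h).tsum_eq

theorem tsum_neg_one_pow_mul_cpow_eq_of_hasSum {c : ℕ → ℝ} {q s : ℝ} (hq : 0 ≤ q)
    (h : HasSum (fun n => c n * (-(√q)⁻¹) ^ (n + 1)) s) :
    ∑' n, (((-1) ^ (n + 1) * c n : ℝ) : ℂ) * (q : ℂ) ^ (-((n : ℂ) + 1) / 2) = s := by
  refine tsum_mul_cpow_eq_of_hasSum hq (h.congr_fun fun n => ?_)
  rw [neg_pow]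
  ring

theorem MonotoneOn.mem_Icc_of_le {β : Type*} [Preorder β] {f : ℕ → β} {n k : ℕ}
    (hf : MonotoneOn f (Set.Iic n)) (hk : k ≤ n) : f k ∈ Set.Icc (f 0) (f n) :=
  ⟨hf (Nat.zero_le n) hk (Nat.zero_le k), hf hk (Set.mem_Iic.2 le_rfl) hk⟩

section

variable (σ A : ℝ) (N Nh : ℕ) (aa ρ ah ρh : ℕ → ℝ)

noncomputable def psiRecip (u : ℂ) : ℂ :=
  (σ : ℂ) ^ 2 / 2 + (A : ℂ) * u
    + ∑ ℓ ∈ Icc 1 N, (aa ℓ : ℂ) * u ^ 2 / ((ρ ℓ : ℂ) * u - 1)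
    - ∑ ℓ ∈ Icc 1 Nh, (ah ℓ : ℂ) * u ^ 2 / ((ρh ℓ : ℂ) * u + 1)

theorem analyticAt_psiRecip : AnalyticAt ℂ (psiRecip σ A N Nh aa ρ ah ρh) 0 := by
  unfold psiRecip
  refine ((analyticAt_const.add (analyticAt_const.mul analyticAt_id)).add
    (Finset.analyticAt_fun_sum _ fun ℓ _ => ?_)).sub (Finset.analyticAt_fun_sum _ fun ℓ _ => ?_)
  · exact (analyticAt_const.mul (analyticAt_id.pow 2)).div
      ((analyticAt_const.mul analyticAt_id).sub analyticAt_const) (by simp)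
  · exact (analyticAt_const.mul (analyticAt_id.pow 2)).div
      ((analyticAt_const.mul analyticAt_id).add analyticAt_const) (by simp)

theorem psiRecip_zero : psiRecip σ A N Nh aa ρ ah ρh 0 = ((σ / √2) ^ 2 : ℝ) := by
  simp [psiRecip, div_pow]

theorem psiRecip_inv {z : ℂ} (hz : z ≠ 0) :
    psiRecip σ A N Nh aa ρ ah ρh z⁻¹ = z⁻¹ ^ 2 * psi σ A N Nh aa ρ ah ρh z := by
  have hsub : ∀ a r : ℂ, a * z⁻¹ ^ 2 / (r * z⁻¹ - 1) = z⁻¹ * (a / (r - z)) := fun a r => by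
    rw [show r * z⁻¹ - 1 = (r - z) * z⁻¹ by field_simp, pow_two, ← mul_assoc,
      mul_div_mul_right _ _ (inv_ne_zero hz)]
    ring
  have hadd : ∀ a r : ℂ, a * z⁻¹ ^ 2 / (r * z⁻¹ + 1) = z⁻¹ * (a / (r + z)) := fun a r => by
    rw [show r * z⁻¹ + 1 = (r + z) * z⁻¹ by field_simp, pow_two, ← mul_assoc,
      mul_div_mul_right _ _ (inv_ne_zero hz)]
    ring
  simp only [psiRecip, psi, hsub, hadd, ← mul_sum]
  field_simp

variable {σ A N Nh aa ρ ah ρh}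

theorem psi_ofReal (x : ℝ) : psi σ A N Nh aa ρ ah ρh x =
    ((σ ^ 2 * x ^ 2 / 2 + A * x + ∑ ℓ ∈ Icc 1 N, aa ℓ * x / (ρ ℓ - x)
      - ∑ ℓ ∈ Icc 1 Nh, ah ℓ * x / (ρh ℓ + x) : ℝ) : ℂ) := by
  simp only [psi, mul_sum]
  push_cast
  ring_nf

theorem re_psi_ofReal_le (haa : ∀ ℓ ∈ Icc 1 N, 0 ≤ aa ℓ) (hah : ∀ ℓ ∈ Icc 1 Nh, 0 ≤ ah ℓ)
    (hρ0 : ρ 0 = 0) (hρh0 : ρh 0 = 0) (hρ : MonotoneOn ρ (Set.Iic N))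
    (hρh : MonotoneOn ρh (Set.Iic Nh)) {x : ℝ} (hx : ρ N < x ∨ x < -ρh Nh) :
    (psi σ A N Nh aa ρ ah ρh x).re ≤ σ ^ 2 * x ^ 2 / 2 + |A| * |x| := by
  have hρN := (hρ0 ▸ hρ.mem_Icc_of_le le_rfl).1
  have hρhN := (hρh0 ▸ hρh.mem_Icc_of_le le_rfl).1
  have hsum : ∑ ℓ ∈ Icc 1 N, aa ℓ * x / (ρ ℓ - x) ≤ 0 := sum_nonpos fun ℓ hℓ => by
    obtain ⟨h0, hN⟩ := hρ0 ▸ hρ.mem_Icc_of_le (mem_Icc.1 hℓ).2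
    have := haa ℓ hℓ
    rcases hx with hx | hx
    · exact div_nonpos_of_nonneg_of_nonpos (by nlinarith) (by linarith)
    · exact div_nonpos_of_nonpos_of_nonneg (by nlinarith) (by linarith)
  have hsumh : 0 ≤ ∑ ℓ ∈ Icc 1 Nh, ah ℓ * x / (ρh ℓ + x) := sum_nonneg fun ℓ hℓ => by
    obtain ⟨h0, hN⟩ := hρh0 ▸ hρh.mem_Icc_of_le (mem_Icc.1 hℓ).2
    have := hah ℓ hℓ
    rcases hx with hx | hx
    · exact div_nonneg (by nlinarith) (by linarith)
    · exact div_nonneg_of_nonpos (by nlinarith) (by linarith)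
  have hA : A * x ≤ |A| * |x| := abs_mul A x ▸ le_abs_self _
  rw [psi_ofReal, Complex.ofReal_re]
  linarith

theorem abs_inv_lt_of_psi_eq (haa : ∀ ℓ ∈ Icc 1 N, 0 ≤ aa ℓ) (hah : ∀ ℓ ∈ Icc 1 Nh, 0 ≤ ah ℓ)
    (hρ0 : ρ 0 = 0) (hρh0 : ρh 0 = 0) (hρ : MonotoneOn ρ (Set.Iic N))
    (hρh : MonotoneOn ρh (Set.Iic Nh)) {δ q x : ℝ} (hδ : 0 < δ)
    (hq : σ ^ 2 * δ⁻¹ ^ 2 / 2 + |A| * δ⁻¹ < q) (hx : ρ N < x ∨ x < -ρh Nh)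
    (hψ : psi σ A N Nh aa ρ ah ρh x = q) : |x⁻¹| < δ := by
  have hle := re_psi_ofReal_le (σ := σ) (A := A) haa hah hρ0 hρh0 hρ hρh hx
  rw [hψ, Complex.ofReal_re] at hle
  have hxδ : δ⁻¹ < |x| := by
    by_contra! h
    have hx2 : x ^ 2 ≤ δ⁻¹ ^ 2 := sq_abs x ▸ pow_le_pow_left₀ (abs_nonneg x) h 2
    nlinarith [abs_nonneg A, sq_nonneg σ]
  rw [abs_inv]
  exact inv_lt_of_inv_lt₀ hδ hxδ

theorem hasSum_inv_of_psi_eq {δ : ℝ} {c : ℕ → ℝ} (hc0 : c 0 = 0)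
    (hc : ∀ t w : ℝ, |t| < δ → 0 < t * w →
      psiRecip σ A N Nh aa ρ ah ρh t = ((t / w) ^ 2 : ℝ) → HasSum (fun n => c n * w ^ n) t)
    {q x w : ℝ} (hxδ : |x⁻¹| < δ) (hψ : psi σ A N Nh aa ρ ah ρh x = q) (hxw : 0 < x * w)
    (hw : w ^ 2 = q⁻¹) : HasSum (fun n => c (n + 1) * w ^ (n + 1)) x⁻¹ := by
  have hx0 : x ≠ 0 := left_ne_zero_of_mul hxw.ne'
  have hF : psiRecip σ A N Nh aa ρ ah ρh (x⁻¹ : ℝ) = ((x⁻¹ / w) ^ 2 : ℝ) := by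
    rw [Complex.ofReal_inv, psiRecip_inv _ _ _ _ _ _ _ _ (by exact_mod_cast hx0), hψ,
      div_pow, div_eq_mul_inv _ (w ^ 2), hw, inv_inv]
    push_cast
    ring
  have hxw' : 0 < x⁻¹ * w := by
    rw [inv_mul_eq_div]
    exact div_pos_iff.2 ((mul_pos_iff.1 hxw).imp And.symm And.symm)
  simpa [hc0] using (hasSum_nat_add_iff' 1).2 (hc x⁻¹ w hxδ hxw' hF)

end

/-- Here `c n` is the paper's `c_{n+1}`. -/
theorem reciprocal_extra_roots_series_sigma_pos
    (σ A : ℝ) (N Nh : ℕ) (aa ρ ah ρh : ℕ → ℝ)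
    (hσ : 0 < σ)
    (hpos : ∀ ℓ ∈ Finset.Icc 1 N, 0 < aa ℓ)
    (hposh : ∀ ℓ ∈ Finset.Icc 1 Nh, 0 < ah ℓ)
    (hρ0 : ρ 0 = 0) (hρh0 : ρh 0 = 0)
    (hmono : ∀ i j, i < j → j ≤ N → ρ i < ρ j)
    (hmonoh : ∀ i j, i < j → j ≤ Nh → ρh i < ρh j)
    (ζM ζhM : ℝ → ℝ)
    (hζM : ∀ q : ℝ, 0 < q → ρ N < ζM q ∧ psi σ A N Nh aa ρ ah ρh (ζM q : ℂ) = (q : ℂ))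
    (hζhM : ∀ q : ℝ, 0 < q → ρh Nh < ζhM q ∧
        psi σ A N Nh aa ρ ah ρh (-(ζhM q : ℝ) : ℂ) = (q : ℂ)) :
    ∃ R > (0 : ℝ), ∃ c : ℕ → ℝ, c 0 = σ / Real.sqrt 2 ∧
      (∀ q : ℂ, R < ‖q‖ →
        Summable (fun n : ℕ => ‖(c n : ℂ) * q ^ (-((n : ℂ) + 1) / 2)‖)) ∧
      (∀ q : ℝ, R < q →
        ((1 / ζM q : ℝ) : ℂ) = ∑' n : ℕ, (c n : ℂ) * (q : ℂ) ^ (-((n : ℂ) + 1) / 2) ∧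
        ((1 / ζhM q : ℝ) : ℂ)
          = -∑' n : ℕ, (((-1 : ℝ) ^ (n + 1) * c n : ℝ) : ℂ) * (q : ℂ) ^ (-((n : ℂ) + 1) / 2)) := by
  obtain ⟨δ, hδ, c, hc0, hc1, hc_sum, hc_hasSum⟩ :=
    exists_hasSum_pow_of_eq_div_sq (analyticAt_psiRecip σ A N Nh aa ρ ah ρh)
      (by positivity : 0 < σ / √2) (psiRecip_zero σ A N Nh aa ρ ah ρh)
  have hρ : MonotoneOn ρ (Set.Iic N) :=
    StrictMonoOn.monotoneOn fun i _ j hj hij => hmono i j hij hj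
  have hρh : MonotoneOn ρh (Set.Iic Nh) :=
    StrictMonoOn.monotoneOn fun i _ j hj hij => hmonoh i j hij hj
  set R₀ := σ ^ 2 * δ⁻¹ ^ 2 / 2 + |A| * δ⁻¹
  have hR₀ : 0 ≤ R₀ := by positivity
  have hroot : ∀ q x w : ℝ, R₀ < q → (ρ N < x ∨ x < -ρh Nh) → psi σ A N Nh aa ρ ah ρh x = q →
      0 < x * w → w ^ 2 = q⁻¹ → HasSum (fun n => c (n + 1) * w ^ (n + 1)) x⁻¹ :=
    fun q x w hq hx hψ => hasSum_inv_of_psi_eq hc0 hc_hasSum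
      (abs_inv_lt_of_psi_eq (fun ℓ hℓ => (hpos ℓ hℓ).le) (fun ℓ hℓ => (hposh ℓ hℓ).le)
        hρ0 hρh0 hρ hρh hδ hq hx hψ) hψ
  refine ⟨R₀ + δ⁻¹ ^ 2, by positivity, fun n => c (n + 1), hc1,
    fun q hq => summable_norm_mul_cpow hδ hc_sum (by linarith), fun q hq => ?_⟩
  have hq₀ : R₀ < q := by linarith [sq_nonneg δ⁻¹]
  have hq0 : 0 < q := hR₀.trans_lt hq₀
  have hw : ((√q)⁻¹) ^ 2 = q⁻¹ := by rw [inv_pow, Real.sq_sqrt hq0.le]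
  obtain ⟨hζ, hψ⟩ := hζM q hq0
  obtain ⟨hζh, hψh⟩ := hζhM q hq0
  have hζ_pos : 0 < ζM q := (hρ0 ▸ hρ.mem_Icc_of_le le_rfl).1.trans_lt hζ
  have hζh_pos : 0 < ζhM q := (hρh0 ▸ hρh.mem_Icc_of_le le_rfl).1.trans_lt hζh
  constructor
  · rw [tsum_mul_cpow_eq_of_hasSum hq0.le
      (hroot q _ _ hq₀ (.inl hζ) hψ (by positivity) hw), one_div]
  · rw [tsum_neg_one_pow_mul_cpow_eq_of_hasSum hq0.le (hroot q (-ζhM q) _ hq₀ (.inr (by linarith))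
      (by exact_mod_cast hψh) (by simp only [neg_mul_neg]; positivity) (by rw [neg_sq, hw]))]
    push_cast
    ring
end

section
/- Assume σ = 0 and a > 0. Then there exist R > 0 and sequences (c_i)_{i≥1}, (d_n)_{n≥1} of real numbers with c_1 = d_1 = a such that both series ∑_{i=1}^∞ c_i q^{−i} and ∑_{n=1}^∞ d_n q^{−n} converge absolutely for every q ∈ ℂ with |q| > R, and for every real q > R one has 1/ζ_{N+1}(q) = ∑_{i=1}^∞ c_i q^{−i} and 1/(ζ_{N+1}(q) − 1) = ∑_{n=1}^∞ d_n q^{−n}. Analogously, if σ = 0 and a < 0, there exist R > 0 and real sequences (c_i)_{i≥1}, (d_n)_{n≥1} such that the corresponding series converge absolutely for |q| > R and for real q > R one has 1/ζ̂_{N̂+1}(q) = −∑_{i=1}^∞ c_i q^{−i} and 1/(ζ̂_{N̂+1}(q) + 1) = −∑_{n=1}^∞ d_n q^{−n}. -/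
/-!
With `σ = 0` one has `ψ(x) = x · G(1/x)` with `G` analytic at `0` and `G(0) = a`, so `ψ(x) = q`
reads `H(1/x) = 1/q` for `H(u) = u / G(u)`. As `H'(0) = 1/a ≠ 0`, the analytic inverse function
theorem gives an analytic local inverse `K` of `H` with `K'(0) = a`. At the root
`x = ζ_{N+1}(q)`, beyond every pole `ρ_ℓ`, all jump terms of `ψ(x)/x` are nonpositive, so
`q ≤ a x`: hence `1/ζ_{N+1}(q) → 0` eventually lies where `K` inverts `H`, i.e.
`1/ζ_{N+1}(q) = K(1/q)`. The two series are the Taylor series at `0` of `K` and of `K / (1 - K)`.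
The case `a < 0` follows by the reflection `z ↦ -z`, which exchanges the two jump sides.
-/

open Finset Filter Topology
open scoped ENNReal

def HasInvPowerExpansion (F : ℝ → ℝ) (c : ℕ → ℝ) (R : ℝ) : Prop :=
  (∀ q : ℂ, R < ‖q‖ → Summable fun n : ℕ => ‖(c n : ℂ) * q ^ (-(n : ℤ) - 1)‖) ∧
    ∀ q : ℝ, R < q → F q = ∑' n : ℕ, c n * q ^ (-(n : ℤ) - 1)

namespace HasInvPowerExpansion

variable {F : ℝ → ℝ} {c : ℕ → ℝ} {R : ℝ}

lemma mono (h : HasInvPowerExpansion F c R) {R' : ℝ} (hR : R ≤ R') :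
    HasInvPowerExpansion F c R' :=
  ⟨fun q hq => h.1 q (hR.trans_lt hq), fun q hq => h.2 q (hR.trans_lt hq)⟩

lemma neg (h : HasInvPowerExpansion F c R) :
    HasInvPowerExpansion (fun q => -F q) (fun n => -c n) R := by
  refine ⟨fun q hq => ?_, fun q hq => ?_⟩
  · simpa only [Complex.ofReal_neg, neg_mul, norm_neg] using h.1 q hq
  · simp only [h.2 q hq, neg_mul, tsum_neg]

lemma exists_of_eventuallyEq (h : HasInvPowerExpansion F c R) {G : ℝ → ℝ}
    (hFG : F =ᶠ[atTop] G) : ∃ R' ≥ R, HasInvPowerExpansion G c R' := by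
  obtain ⟨Q, hQ⟩ := eventually_atTop.1 hFG
  refine ⟨max R Q, le_max_left _ _, fun q hq => h.1 q ((le_max_left _ _).trans_lt hq),
    fun q hq => ?_⟩
  rw [← hQ q ((le_max_right _ _).trans hq.le), h.2 q ((le_max_left _ _).trans_lt hq)]

end HasInvPowerExpansion

lemma zpow_neg_natCast_sub_one {K : Type*} [DivisionRing K] (x : K) (n : ℕ) :
    x ^ (-(n : ℤ) - 1) = x⁻¹ ^ (n + 1) := by
  rw [show -(n : ℤ) - 1 = -((n + 1 : ℕ) : ℤ) by push_cast; ring, zpow_neg, zpow_natCast, inv_pow]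

theorem AnalyticAt.exists_hasInvPowerExpansion_comp_inv {f : ℝ → ℝ} (hf : AnalyticAt ℝ f 0)
    (hf0 : f 0 = 0) :
    ∃ R > 0, ∃ c : ℕ → ℝ, c 0 = deriv f 0 ∧ HasInvPowerExpansion (fun q => f q⁻¹) c R := by
  obtain ⟨p, r, hp⟩ := hf
  obtain ⟨δ, hδ0, hδr⟩ := ENNReal.lt_iff_exists_nnreal_btwn.1 hp.r_pos
  have hδ0' : (0 : ℝ) < δ := by exact_mod_cast hδ0
  have hδp : (δ : ℝ≥0∞) < p.radius := hδr.trans_le hp.r_le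
  refine ⟨δ⁻¹, by positivity, fun n => p.coeff (n + 1), by simp [hp.hasFPowerSeriesAt.deriv],
    fun q hq => ?_, fun q hq => ?_⟩
  · have hq0 : 0 < ‖q‖ := (inv_pos.2 hδ0').trans hq
    have ht : ‖q‖₊⁻¹ < δ := by
      rw [← NNReal.coe_lt_coe, NNReal.coe_inv, coe_nnnorm]
      exact inv_lt_of_inv_lt₀ hδ0' hq
    have hsum := p.summable_norm_mul_pow ((ENNReal.coe_lt_coe.2 ht).trans hδp)
    refine ((summable_nat_add_iff 1).2 hsum).congr fun n => ?_
    simp [zpow_neg_natCast_sub_one, p.norm_apply_eq_norm_coef]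
  · have hq0 : 0 < q := (inv_pos.2 hδ0').trans hq
    have hw : q⁻¹ ∈ Metric.eball (0 : ℝ) r := by
      rw [mem_eball_zero_iff, enorm_eq_nnnorm]
      refine lt_trans (ENNReal.coe_lt_coe.2 ?_) hδr
      rw [← NNReal.coe_lt_coe, coe_nnnorm, norm_inv, Real.norm_of_nonneg hq0.le]
      exact inv_lt_of_inv_lt₀ hδ0' hq
    have hsum := (hasSum_nat_add_iff' 1).2 (hp.hasSum hw)
    simp only [FormalMultilinearSeries.apply_eq_pow_smul_coeff, smul_eq_mul, zero_add,
      range_one, sum_singleton, pow_zero, one_mul] at hsum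
    have hcoeff0 : p.coeff 0 = 0 := by rw [FormalMultilinearSeries.coeff, hp.coeff_zero, hf0]
    rw [hcoeff0, sub_zero] at hsum
    simp only [zpow_neg_natCast_sub_one, mul_comm (p.coeff _), hsum.tsum_eq]

theorem AnalyticAt.exists_hasInvPowerExpansion {f : ℝ → ℝ} (hf : AnalyticAt ℝ f 0)
    (hf0 : f 0 = 0) {F : ℝ → ℝ} (hF : (fun q => f q⁻¹) =ᶠ[atTop] F) :
    ∃ R > 0, ∃ c : ℕ → ℝ, c 0 = deriv f 0 ∧ HasInvPowerExpansion F c R := by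
  obtain ⟨R, hR, c, hc, h⟩ := hf.exists_hasInvPowerExpansion_comp_inv hf0
  obtain ⟨R', hRR', h'⟩ := h.exists_of_eventuallyEq hF
  exact ⟨R', hR.trans_le hRR', c, hc, h'⟩

theorem AnalyticAt.exists_analyticAt_leftInverse {𝕜 : Type*} [NontriviallyNormedField 𝕜]
    [CompleteSpace 𝕜] [CharZero 𝕜] {f : 𝕜 → 𝕜} {a : 𝕜} (hf : AnalyticAt 𝕜 f a)
    (hf' : deriv f a ≠ 0) :
    ∃ g : 𝕜 → 𝕜, AnalyticAt 𝕜 g (f a) ∧ HasDerivAt g (deriv f a)⁻¹ (f a) ∧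
      ∀ᶠ x in 𝓝 a, g (f x) = x :=
  ⟨_, hf.analyticAt_localInverse hf', (hf.hasStrictDerivAt.to_localInverse hf').hasDerivAt,
    hf.hasStrictDerivAt.eventually_left_inverse hf'⟩

lemma mem_Icc_of_increasing {ρ : ℕ → ℝ} {N : ℕ} (hρ0 : ρ 0 = 0)
    (hmono : ∀ i j, i < j → j ≤ N → ρ i < ρ j) {ℓ : ℕ} (hℓ : ℓ ≤ N) :
    ρ ℓ ∈ Set.Icc 0 (ρ N) := by
  constructor
  · rcases ℓ.eq_zero_or_pos with rfl | hℓ0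
    · exact hρ0.ge
    · exact hρ0 ▸ (hmono 0 ℓ hℓ0 hℓ).le
  · rcases hℓ.eq_or_lt with rfl | hℓN
    · exact le_rfl
    · exact (hmono ℓ N hℓN le_rfl).le

noncomputable def psiReal (A : ℝ) (N Nh : ℕ) (aa ρ ah ρh : ℕ → ℝ) (x : ℝ) : ℝ :=
  A * x + x * ∑ ℓ ∈ Icc 1 N, aa ℓ / (ρ ℓ - x) - x * ∑ ℓ ∈ Icc 1 Nh, ah ℓ / (ρh ℓ + x)

/-- `ψ(x) / x` in the variable `u = 1 / x`; unlike `psiReal`, it is analytic at `x = ∞`. -/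
noncomputable def psiSlope (A : ℝ) (N Nh : ℕ) (aa ρ ah ρh : ℕ → ℝ) (u : ℝ) : ℝ :=
  A + ∑ ℓ ∈ Icc 1 N, aa ℓ * u / (ρ ℓ * u - 1) - ∑ ℓ ∈ Icc 1 Nh, ah ℓ * u / (ρh ℓ * u + 1)

section Hyperexponential

variable (A : ℝ) (N Nh : ℕ) (aa ρ ah ρh : ℕ → ℝ)

lemma psi_zero_ofReal (x : ℝ) :
    psi 0 A N Nh aa ρ ah ρh x = psiReal A N Nh aa ρ ah ρh x := by
  simp only [psi, psiReal]
  push_cast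
  ring

lemma psi_zero_ofReal_neg (x : ℝ) :
    psi 0 A N Nh aa ρ ah ρh (-x) = psiReal (-A) Nh N ah ρh aa ρ x := by
  simp only [psi, psiReal]
  push_cast
  simp only [sub_neg_eq_add, ← sub_eq_add_neg]
  ring

lemma analyticAt_psiSlope : AnalyticAt ℝ (psiSlope A N Nh aa ρ ah ρh) 0 := by
  refine (analyticAt_const.add (Finset.analyticAt_fun_sum _ fun ℓ _ => ?_)).sub
    (Finset.analyticAt_fun_sum _ fun ℓ _ => ?_)
  · exact (analyticAt_const.mul analyticAt_id).div
      ((analyticAt_const.mul analyticAt_id).sub analyticAt_const) (by norm_num)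
  · exact (analyticAt_const.mul analyticAt_id).div
      ((analyticAt_const.mul analyticAt_id).add analyticAt_const) (by norm_num)

@[simp]
lemma psiSlope_zero : psiSlope A N Nh aa ρ ah ρh 0 = A := by
  simp [psiSlope]

variable {A N Nh aa ρ ah ρh}

lemma psiReal_eq_mul_psiSlope_inv {x : ℝ} (hx : x ≠ 0) (hρ : ∀ ℓ ∈ Icc 1 N, ρ ℓ ≠ x)
    (hρh : ∀ ℓ ∈ Icc 1 Nh, ρh ℓ + x ≠ 0) :
    psiReal A N Nh aa ρ ah ρh x = x * psiSlope A N Nh aa ρ ah ρh x⁻¹ := by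
  have h1 : ∀ ℓ ∈ Icc 1 N, aa ℓ * x⁻¹ / (ρ ℓ * x⁻¹ - 1) = aa ℓ / (ρ ℓ - x) := fun ℓ hℓ => by
    have := sub_ne_zero.2 (hρ ℓ hℓ)
    field_simp
  have h2 : ∀ ℓ ∈ Icc 1 Nh, ah ℓ * x⁻¹ / (ρh ℓ * x⁻¹ + 1) = ah ℓ / (ρh ℓ + x) := fun ℓ hℓ => by
    have := hρh ℓ hℓ
    field_simp
  rw [psiSlope, sum_congr rfl h1, sum_congr rfl h2, psiReal]
  ring

lemma psiReal_le_mul (hpos : ∀ ℓ ∈ Icc 1 N, 0 < aa ℓ) (hposh : ∀ ℓ ∈ Icc 1 Nh, 0 < ah ℓ)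
    {x : ℝ} (hx : 0 < x) (hρ : ∀ ℓ ∈ Icc 1 N, ρ ℓ < x) (hρh : ∀ ℓ ∈ Icc 1 Nh, 0 ≤ ρh ℓ) :
    psiReal A N Nh aa ρ ah ρh x ≤ A * x := by
  have h1 : ∑ ℓ ∈ Icc 1 N, aa ℓ / (ρ ℓ - x) ≤ 0 :=
    sum_nonpos fun ℓ hℓ => (div_neg_of_pos_of_neg (hpos ℓ hℓ) (by linarith [hρ ℓ hℓ])).le
  have h2 : 0 ≤ ∑ ℓ ∈ Icc 1 Nh, ah ℓ / (ρh ℓ + x) :=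
    sum_nonneg fun ℓ hℓ => (div_pos (hposh ℓ hℓ) (by linarith [hρh ℓ hℓ])).le
  rw [psiReal]
  nlinarith [mul_nonpos_of_nonneg_of_nonpos hx.le h1, mul_nonneg hx.le h2]

end Hyperexponential

section RootExpansion

variable {A : ℝ} {N Nh : ℕ} {aa ρ ah ρh : ℕ → ℝ} {ζ : ℝ → ℝ}

lemma inv_le_div_of_psiReal_eq (hpos : ∀ ℓ ∈ Icc 1 N, 0 < aa ℓ)
    (hposh : ∀ ℓ ∈ Icc 1 Nh, 0 < ah ℓ) {x q : ℝ} (hx : 0 < x) (hρx : ∀ ℓ ∈ Icc 1 N, ρ ℓ < x)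
    (hρh : ∀ ℓ ∈ Icc 1 Nh, 0 ≤ ρh ℓ) (hq : 0 < q) (hxq : psiReal A N Nh aa ρ ah ρh x = q) :
    x⁻¹ ≤ A / q := by
  have hqx : q ≤ A * x := hxq ▸ psiReal_le_mul hpos hposh hx hρx hρh
  rw [inv_le_iff_one_le_mul₀ hx, div_mul_eq_mul_div, le_div_iff₀ hq]
  linarith

lemma inv_div_psiSlope_inv_of_psiReal_eq {x q : ℝ} (hx : x ≠ 0)
    (hρx : ∀ ℓ ∈ Icc 1 N, ρ ℓ ≠ x) (hρh : ∀ ℓ ∈ Icc 1 Nh, ρh ℓ + x ≠ 0)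
    (hxq : psiReal A N Nh aa ρ ah ρh x = q) :
    x⁻¹ / psiSlope A N Nh aa ρ ah ρh x⁻¹ = q⁻¹ := by
  have hslope : psiSlope A N Nh aa ρ ah ρh x⁻¹ = q * x⁻¹ := by
    rw [← hxq, psiReal_eq_mul_psiSlope_inv hx hρx hρh]
    field_simp
  rw [hslope, div_mul_cancel_right₀ (inv_ne_zero hx)]

lemma eventually_inv_root_eq (hpos : ∀ ℓ ∈ Icc 1 N, 0 < aa ℓ)
    (hposh : ∀ ℓ ∈ Icc 1 Nh, 0 < ah ℓ) (hρ : ∀ ℓ ≤ N, ρ ℓ ∈ Set.Icc 0 (ρ N))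
    (hρh : ∀ ℓ ≤ Nh, 0 ≤ ρh ℓ)
    (hζ : ∀ q, 0 < q → ρ N < ζ q ∧ psiReal A N Nh aa ρ ah ρh (ζ q) = q) {K : ℝ → ℝ}
    (hK : ∀ᶠ u in 𝓝 0, K (u / psiSlope A N Nh aa ρ ah ρh u) = u) :
    ∀ᶠ q in atTop, K q⁻¹ = 1 / ζ q := by
  have hroot : ∀ q, 0 < q → 0 < ζ q ∧ ∀ ℓ ∈ Icc 1 N, ρ ℓ < ζ q := fun q hq =>
    ⟨(hρ N le_rfl).1.trans_lt (hζ q hq).1,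
      fun ℓ hℓ => (hρ ℓ (mem_Icc.1 hℓ).2).2.trans_lt (hζ q hq).1⟩
  have hρh' : ∀ ℓ ∈ Icc 1 Nh, 0 ≤ ρh ℓ := fun ℓ hℓ => hρh ℓ (mem_Icc.1 hℓ).2
  have hlim : Tendsto (fun q => (ζ q)⁻¹) atTop (𝓝 0) := by
    refine tendsto_of_tendsto_of_tendsto_of_le_of_le' tendsto_const_nhds
      ((tendsto_const_nhds (x := A)).div_atTop tendsto_id) ?_ ?_
    · filter_upwards [eventually_gt_atTop 0] with q hq using (inv_pos.2 (hroot q hq).1).le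
    · filter_upwards [eventually_gt_atTop 0] with q hq
      exact inv_le_div_of_psiReal_eq hpos hposh (hroot q hq).1 (hroot q hq).2 hρh' hq
        (hζ q hq).2
  filter_upwards [hlim.eventually hK, eventually_gt_atTop 0] with q hKq hq
  obtain ⟨hx, hρx⟩ := hroot q hq
  rw [inv_div_psiSlope_inv_of_psiReal_eq hx.ne' (fun ℓ hℓ => (hρx ℓ hℓ).ne)
    (fun ℓ hℓ => by linarith [hρh' ℓ hℓ]) (hζ q hq).2] at hKq
  rw [hKq, one_div]

end RootExpansion

theorem exists_hasInvPowerExpansion_inv_root {A : ℝ} {N Nh : ℕ} {aa ρ ah ρh : ℕ → ℝ}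
    (hA : 0 < A) (hpos : ∀ ℓ ∈ Icc 1 N, 0 < aa ℓ) (hposh : ∀ ℓ ∈ Icc 1 Nh, 0 < ah ℓ)
    (hρ : ∀ ℓ ≤ N, ρ ℓ ∈ Set.Icc 0 (ρ N)) (hρh : ∀ ℓ ≤ Nh, 0 ≤ ρh ℓ) {ζ : ℝ → ℝ}
    (hζ : ∀ q, 0 < q → ρ N < ζ q ∧ psiReal A N Nh aa ρ ah ρh (ζ q) = q) (s : ℝ) :
    ∃ R > 0, ∃ c d : ℕ → ℝ, c 0 = A ∧ d 0 = A ∧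
      HasInvPowerExpansion (fun q => 1 / ζ q) c R ∧
      HasInvPowerExpansion (fun q => 1 / (ζ q - s)) d R := by
  have hG := analyticAt_psiSlope A N Nh aa ρ ah ρh
  have hG0 : psiSlope A N Nh aa ρ ah ρh 0 ≠ 0 := by simpa using hA.ne'
  have hH : HasDerivAt (fun u => u / psiSlope A N Nh aa ρ ah ρh u) A⁻¹ 0 := by
    refine ((hasDerivAt_id' 0).fun_div hG.differentiableAt.hasDerivAt hG0).congr_deriv ?_
    simp [pow_two]
  have hHa : AnalyticAt ℝ (fun u => u / psiSlope A N Nh aa ρ ah ρh u) 0 :=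
    analyticAt_id.fun_div hG hG0
  obtain ⟨K, hK, hK', hKH⟩ := hHa.exists_analyticAt_leftInverse (by rw [hH.deriv]; positivity)
  simp only [hH.deriv, inv_inv, zero_div] at hK hK'
  have hK0 : K 0 = 0 := by simpa using hKH.self_of_nhds
  have hKζ := eventually_inv_root_eq hpos hposh hρ hρh hζ hKH
  set L : ℝ → ℝ := fun w => K w / (1 - s * K w)
  have hL : AnalyticAt ℝ L 0 :=
    hK.div (analyticAt_const.sub (analyticAt_const.mul hK)) (by simp [hK0])
  have hL' : HasDerivAt L A 0 := by
    simpa [L, hK0] using hK'.fun_div ((hK'.const_mul s).const_sub 1) (by simp [hK0])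
  have hLζ : ∀ᶠ q in atTop, L q⁻¹ = 1 / (ζ q - s) := by
    filter_upwards [hKζ, eventually_gt_atTop 0] with q hq hq0
    have : ζ q ≠ 0 := ((hρ N le_rfl).1.trans_lt (hζ q hq0).1).ne'
    simp only [L, hq]
    field_simp
  obtain ⟨R₁, hR₁, c, hc, hcF⟩ := hK.exists_hasInvPowerExpansion hK0 hKζ
  obtain ⟨R₂, -, d, hd, hdF⟩ := hL.exists_hasInvPowerExpansion (by simp [L, hK0]) hLζ
  exact ⟨max R₁ R₂, lt_max_of_lt_left hR₁, c, d, hc.trans hK'.deriv, hd.trans hL'.deriv,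
    hcF.mono (le_max_left _ _), hdF.mono (le_max_right _ _)⟩

/-- `c n, d n` are the paper's `c_{n+1}, d_{n+1}`. -/
theorem reciprocal_extra_root_series_sigma_zero
    (σ A : ℝ) (N Nh : ℕ) (aa ρ ah ρh : ℕ → ℝ)
    (hσ : σ = 0)
    (hpos : ∀ ℓ ∈ Finset.Icc 1 N, 0 < aa ℓ)
    (hposh : ∀ ℓ ∈ Finset.Icc 1 Nh, 0 < ah ℓ)
    (hρ0 : ρ 0 = 0) (hρh0 : ρh 0 = 0)
    (hmono : ∀ i j, i < j → j ≤ N → ρ i < ρ j)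
    (hmonoh : ∀ i j, i < j → j ≤ Nh → ρh i < ρh j)
    (ζM ζhM : ℝ → ℝ)
    (hζM : 0 < A → ∀ q : ℝ, 0 < q → ρ N < ζM q ∧
        psi σ A N Nh aa ρ ah ρh (ζM q : ℂ) = (q : ℂ))
    (hζhM : A < 0 → ∀ q : ℝ, 0 < q → ρh Nh < ζhM q ∧
        psi σ A N Nh aa ρ ah ρh (-(ζhM q : ℝ) : ℂ) = (q : ℂ)) :
    (0 < A →
      ∃ R > (0 : ℝ), ∃ c d : ℕ → ℝ, c 0 = A ∧ d 0 = A ∧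
        (∀ q : ℂ, R < ‖q‖ →
          Summable (fun n : ℕ => ‖(c n : ℂ) * q ^ (-(n : ℤ) - 1)‖) ∧
          Summable (fun n : ℕ => ‖(d n : ℂ) * q ^ (-(n : ℤ) - 1)‖)) ∧
        (∀ q : ℝ, R < q →
          1 / ζM q = ∑' n : ℕ, c n * q ^ (-(n : ℤ) - 1) ∧
          1 / (ζM q - 1) = ∑' n : ℕ, d n * q ^ (-(n : ℤ) - 1))) ∧
    (A < 0 →
      ∃ R > (0 : ℝ), ∃ c d : ℕ → ℝ,
        (∀ q : ℂ, R < ‖q‖ →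
          Summable (fun n : ℕ => ‖(c n : ℂ) * q ^ (-(n : ℤ) - 1)‖) ∧
          Summable (fun n : ℕ => ‖(d n : ℂ) * q ^ (-(n : ℤ) - 1)‖)) ∧
        (∀ q : ℝ, R < q →
          1 / ζhM q = -∑' n : ℕ, c n * q ^ (-(n : ℤ) - 1) ∧
          1 / (ζhM q + 1) = -∑' n : ℕ, d n * q ^ (-(n : ℤ) - 1))) := by
  subst hσ
  have hρ := fun ℓ (hℓ : ℓ ≤ N) => mem_Icc_of_increasing hρ0 hmono hℓ
  have hρh := fun ℓ (hℓ : ℓ ≤ Nh) => mem_Icc_of_increasing hρh0 hmonoh hℓ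
  refine ⟨fun hA => ?_, fun hA => ?_⟩
  · obtain ⟨R, hR, c, d, hc, hd, hcF, hdF⟩ :=
      exists_hasInvPowerExpansion_inv_root hA hpos hposh hρ (fun ℓ hℓ => (hρh ℓ hℓ).1)
        (fun q hq => (hζM hA q hq).imp_right fun h => by
          rwa [psi_zero_ofReal, Complex.ofReal_inj] at h) 1
    exact ⟨R, hR, c, d, hc, hd, fun q hq => ⟨hcF.1 q hq, hdF.1 q hq⟩,
      fun q hq => ⟨hcF.2 q hq, hdF.2 q hq⟩⟩
  · obtain ⟨R, hR, c, d, -, -, hcF, hdF⟩ :=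
      exists_hasInvPowerExpansion_inv_root (neg_pos.2 hA) hposh hpos hρh
        (fun ℓ hℓ => (hρ ℓ hℓ).1)
        (fun q hq => (hζhM hA q hq).imp_right fun h => by
          rwa [psi_zero_ofReal_neg, Complex.ofReal_inj] at h) (-1)
    refine ⟨R, hR, _, _, fun q hq => ⟨hcF.neg.1 q hq, hdF.neg.1 q hq⟩, fun q hq => ⟨?_, ?_⟩⟩
    · rw [← hcF.neg.2 q hq, neg_neg]
    · rw [← hdF.neg.2 q hq, neg_neg, sub_neg_eq_add]
end
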